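/- For every finite graph G, the number of minimal Roman dominating functions on G equals the number of minimal perfect Roman dominating functions on G. -/
import Mathlib

/-- A Roman dominating function: every vertex with value 0 has a neighbor with value 2. -/
def IsRDF {V : Type*} (G : SimpleGraph V) (f : V → Fin 3) : Prop :=
  ∀ v, f v = 0 → ∃ u, G.Adj v u ∧ f u = 2

/-- A perfect Roman dominating function: every vertex with value 0 has exactly one
neighbor with value 2. -/
def IsPRDF {V : Type*} (G : SimpleGraph V) (f : V → Fin 3) : Prop :=
  ∀ v, f v = 0 → ∃! u, G.Adj v u ∧ f u = 2

section Aux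

variable {V : Type*} [DecidableEq V] (G : SimpleGraph V)

/-- `v` has at least two neighbors with value 2. -/
def Multi (f : V → Fin 3) (v : V) : Prop :=
  ∃ u w, u ≠ w ∧ G.Adj v u ∧ f u = 2 ∧ G.Adj v w ∧ f w = 2

open Classical in
noncomputable def phi (f : V → Fin 3) : V → Fin 3 :=
  fun v => if f v = 0 ∧ Multi G f v then 1 else f v

open Classical in
noncomputable def psi (g : V → Fin 3) : V → Fin 3 :=
  fun v => if g v = 1 ∧ Multi G g v then 0 else g v

variable {G}

lemma phi_two {f : V → Fin 3} {u : V} : phi G f u = 2 ↔ f u = 2 := by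
  unfold phi; split_ifs with h
  · constructor <;> intro hh <;> [exact absurd hh (by decide); exact absurd (h.1.symm.trans hh) (by decide)]
  · rfl

lemma psi_two {g : V → Fin 3} {u : V} : psi G g u = 2 ↔ g u = 2 := by
  unfold psi; split_ifs with h
  · constructor <;> intro hh <;> [exact absurd hh (by decide); exact absurd (h.1.symm.trans hh) (by decide)]
  · rfl

lemma multi_congr {f g : V → Fin 3} (h : ∀ u, f u = 2 ↔ g u = 2) {v : V} :
    Multi G f v ↔ Multi G g v := by
  constructor
  · rintro ⟨u, w, hne, h1, h2, h3, h4⟩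
    exact ⟨u, w, hne, h1, (h u).mp h2, h3, (h w).mp h4⟩
  · rintro ⟨u, w, hne, h1, h2, h3, h4⟩
    exact ⟨u, w, hne, h1, (h u).mpr h2, h3, (h w).mpr h4⟩

lemma multi_phi {f : V → Fin 3} {v : V} : Multi G (phi G f) v ↔ Multi G f v :=
  multi_congr (fun _ => phi_two)

lemma multi_psi {g : V → Fin 3} {v : V} : Multi G (psi G g) v ↔ Multi G g v :=
  multi_congr (fun _ => psi_two)

lemma le_app {f g : V → Fin 3} (h : f ≤ g) (v : V) : f v ≤ g v := h v

lemma psi_le {g : V → Fin 3} : psi G g ≤ g := by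
  intro v; unfold psi; split_ifs with h
  · exact Fin.zero_le _
  · exact le_rfl

/-- In a minimal RDF, a vertex with value 1 has no neighbor with value 2. -/
lemma min_one_no_two {f : V → Fin 3} (hf : Minimal (IsRDF G) f) {v u : V}
    (hv : f v = 1) (hadj : G.Adj v u) (hu : f u = 2) : False := by
  set f' : V → Fin 3 := Function.update f v 0 with hf'
  have hne : u ≠ v := fun h => by rw [h, hv] at hu; exact absurd hu (by decide)
  have hrdf : IsRDF G f' := by
    intro w hw
    by_cases hwv : w = v
    · exact ⟨u, hwv ▸ hadj, by simp [hf', Function.update_of_ne hne, hu]⟩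
    · rw [hf', Function.update_of_ne hwv] at hw
      obtain ⟨x, hx1, hx2⟩ := hf.1 w hw
      have hxv : x ≠ v := fun h => by rw [h, hv] at hx2; exact absurd hx2 (by decide)
      exact ⟨x, hx1, by rw [hf', Function.update_of_ne hxv]; exact hx2⟩
  have hle : f' ≤ f := by
    intro w; by_cases hwv : w = v
    · subst hwv; simp [hf']
    · rw [hf', Function.update_of_ne hwv]
  have hend := le_app (hf.2 hrdf hle) v
  rw [hf', Function.update_self] at hend
  omega

/-- In a minimal RDF, every vertex with value 2 has a private 0-neighbor. -/
lemma min_private {f : V → Fin 3} (hf : Minimal (IsRDF G) f) {u : V} (hu : f u = 2) :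
    ∃ w, G.Adj u w ∧ f w = 0 ∧ ∀ x, G.Adj w x → f x = 2 → x = u := by
  by_contra hcon
  push_neg at hcon
  set f' : V → Fin 3 := Function.update f u 1 with hf'
  have hrdf : IsRDF G f' := by
    intro w hw
    have hwu : w ≠ u := fun h => by
      rw [h, hf', Function.update_self] at hw; exact absurd hw (by decide)
    rw [hf', Function.update_of_ne hwu] at hw
    obtain ⟨x, hx1, hx2⟩ := hf.1 w hw
    by_cases hxu : x = u
    · subst hxu
      obtain ⟨y, hy1, hy2, hy3⟩ := hcon w (hx1.symm) hw
      exact ⟨y, hy1, by rw [hf', Function.update_of_ne hy3]; exact hy2⟩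
    · exact ⟨x, hx1, by rw [hf', Function.update_of_ne hxu]; exact hx2⟩
  have hle : f' ≤ f := by
    rw [Pi.le_def]; intro w; by_cases hwu : w = u
    · subst hwu; rw [hf', Function.update_self]; omega
    · rw [hf', Function.update_of_ne hwu]
  have hend := le_app (hf.2 hrdf hle) u
  rw [hf', Function.update_self] at hend
  omega

/-- phi of an RDF is a PRDF. -/
lemma phi_prdf {f : V → Fin 3} (hf : IsRDF G f) : IsPRDF G (phi G f) := by
  intro v hv
  have hnc : ¬(f v = 0 ∧ Multi G f v) := by
    intro h; unfold phi at hv; rw [if_pos h] at hv; exact absurd hv (by decide)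
  have hfv : f v = 0 := by unfold phi at hv; rwa [if_neg hnc] at hv
  obtain ⟨u, hu1, hu2⟩ := hf v hfv
  refine ⟨u, ⟨hu1, phi_two.mpr hu2⟩, ?_⟩
  rintro x ⟨hx1, hx2⟩
  by_contra hxu
  exact hnc ⟨hfv, x, u, hxu, hx1, phi_two.mp hx2, hu1, hu2⟩

lemma phi_minimal {f : V → Fin 3} (hf : Minimal (IsRDF G) f) :
    Minimal (IsPRDF G) (phi G f) := by
  refine ⟨phi_prdf hf.1, ?_⟩
  intro h hh hle
  -- step 1 : h keeps every 2 of f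
  have h2 : ∀ u, f u = 2 → h u = 2 := by
    intro u hu
    by_contra hhu
    obtain ⟨w, hw1, hw2, hw3⟩ := min_private hf hu
    have hphw : phi G f w = 0 := by
      unfold phi
      rw [if_neg, hw2]
      rintro ⟨-, x, y, hxy, ha1, ha2, ha3, ha4⟩
      exact hxy ((hw3 x ha1 ha2).trans (hw3 y ha3 ha4).symm)
    have hhw : h w = 0 := le_antisymm (hphw ▸ le_app hle w) (Fin.zero_le _)
    obtain ⟨x, ⟨hx1, hx2⟩, -⟩ := hh w hhw
    have hp2x : phi G f x = 2 := by have h1x := le_app hle x; omega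
    have : f x = 2 := phi_two.mp hp2x
    exact hhu ((hw3 x hx1 this) ▸ hx2)
  rw [Pi.le_def]
  intro v
  rcases (show phi G f v = 0 ∨ phi G f v = 1 ∨ phi G f v = 2 by omega) with h0 | h1 | hh2
  · rw [h0]; exact Fin.zero_le _
  · rw [h1]
    by_contra hlt
    have hhv : h v = 0 := by omega
    obtain ⟨x, hx, hxu⟩ := hh v hhv
    by_cases hc : f v = 0 ∧ Multi G f v
    · obtain ⟨a, b, hab, ha1, ha2, hb1, hb2⟩ := hc.2
      exact hab ((hxu a ⟨ha1, h2 a ha2⟩).trans (hxu b ⟨hb1, h2 b hb2⟩).symm)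
    · -- f v = 1 here; build a smaller RDF below f
      have hfv : f v = 1 := by unfold phi at h1; rwa [if_neg hc] at h1
      classical
      set h'' : V → Fin 3 := fun x => if f x = 0 ∧ Multi G f x then 0 else h x with hh''
      have h''two : ∀ x, h'' x = 2 ↔ f x = 2 := by
        intro x; rw [hh'']; dsimp only; split_ifs with hx
        · constructor <;> intro hxx
          · exact absurd hxx (by decide)
          · rw [hx.1] at hxx; exact absurd hxx (by decide)
        · constructor
          · intro hxx
            have h1x := le_app hle x
            have hp2 : phi G f x = 2 := by omega
            exact phi_two.mp hp2
          · exact h2 x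
      have hrdf : IsRDF G h'' := by
        intro x hx
        rw [hh''] at hx; dsimp only at hx
        split_ifs at hx with hcx
        · obtain ⟨a, b, hab, ha1, ha2, hb1, hb2⟩ := hcx.2
          exact ⟨a, ha1, (h''two a).mpr ha2⟩
        · obtain ⟨y, ⟨hy1, hy2⟩, -⟩ := hh x hx
          have hp2y : phi G f y = 2 := by have h1y := le_app hle y; omega
          exact ⟨y, hy1, (h''two y).mpr (phi_two.mp hp2y)⟩
      have hle'' : h'' ≤ f := by
        intro x; rw [hh'']; dsimp only; split_ifs with hcx
        · rw [hcx.1]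
        · have hle1 := le_app hle x
          unfold phi at hle1; rw [if_neg hcx] at hle1; exact hle1
      have hend := le_app (hf.2 hrdf hle'') v
      have hv'' : h'' v = 0 := by
        rw [hh'']; dsimp only; rw [if_neg hc]; exact hhv
      omega
  · rw [hh2]; have hh2' := h2 v (phi_two.mp hh2); omega

lemma phi_psi {g : V → Fin 3} (hg : IsPRDF G g) : phi G (psi G g) = g := by
  funext v
  rcases (show g v = 0 ∨ g v = 1 ∨ g v = 2 by omega) with h0 | h1 | h2
  · have hnm : ¬ Multi G g v := by
      rintro ⟨a, b, hab, ha1, ha2, hb1, hb2⟩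
      obtain ⟨x, -, hxu⟩ := hg v h0
      exact hab ((hxu a ⟨ha1, ha2⟩).trans (hxu b ⟨hb1, hb2⟩).symm)
    have hpsiv : psi G g v = 0 := by
      unfold psi; rw [if_neg (by rintro ⟨h1', -⟩; omega), h0]
    unfold phi
    rw [if_neg, hpsiv, h0]
    rintro ⟨-, hm⟩
    exact hnm (multi_psi.mp hm)
  · by_cases hm : Multi G g v
    · have hpsiv : psi G g v = 0 := by unfold psi; rw [if_pos ⟨h1, hm⟩]
      unfold phi
      rw [if_pos ⟨hpsiv, multi_psi.mpr hm⟩, h1]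
    · have hpsiv : psi G g v = 1 := by unfold psi; rw [if_neg (fun h => hm h.2), h1]
      unfold phi
      rw [if_neg (by rw [hpsiv]; rintro ⟨h, -⟩; exact absurd h (by decide)), hpsiv, h1]
  · have hpsiv : psi G g v = 2 := psi_two.mpr h2
    unfold phi
    rw [if_neg (by rw [hpsiv]; rintro ⟨h, -⟩; exact absurd h (by decide)), hpsiv, h2]

lemma psi_phi {f : V → Fin 3} (hf : Minimal (IsRDF G) f) : psi G (phi G f) = f := by
  funext v
  rcases (show f v = 0 ∨ f v = 1 ∨ f v = 2 by omega) with h0 | h1 | h2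
  · by_cases hm : Multi G f v
    · have hphiv : phi G f v = 1 := by unfold phi; rw [if_pos ⟨h0, hm⟩]
      unfold psi
      rw [if_pos ⟨hphiv, multi_phi.mpr hm⟩, h0]
    · have hphiv : phi G f v = 0 := by unfold phi; rw [if_neg (fun h => hm h.2), h0]
      unfold psi
      rw [if_neg (by rw [hphiv]; rintro ⟨h, -⟩; exact absurd h (by decide)), hphiv, h0]
  · have hnm : ¬ Multi G f v := by
      rintro ⟨a, b, hab, ha1, ha2, -, -⟩
      exact min_one_no_two hf h1 ha1 ha2
    have hphiv : phi G f v = 1 := by unfold phi; rw [if_neg (by rw [h1]; rintro ⟨h,-⟩; exact absurd h (by decide)), h1]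
    unfold psi
    rw [if_neg, hphiv, h1]
    rintro ⟨-, hm⟩
    exact hnm (multi_phi.mp hm)
  · have hphiv : phi G f v = 2 := phi_two.mpr h2
    unfold psi
    rw [if_neg (by rw [hphiv]; rintro ⟨h, -⟩; exact absurd h (by decide)), hphiv, h2]

lemma psi_minimal {g : V → Fin 3} (hg : Minimal (IsPRDF G) g) :
    Minimal (IsRDF G) (psi G g) := by
  constructor
  · intro v hv
    unfold psi at hv
    split_ifs at hv with hc
    · obtain ⟨a, b, hab, ha1, ha2, -, -⟩ := hc.2
      exact ⟨a, ha1, psi_two.mpr ha2⟩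
    · obtain ⟨u, ⟨hu1, hu2⟩, -⟩ := hg.1 v hv
      exact ⟨u, hu1, psi_two.mpr hu2⟩
  · intro h hh hle
    have hle_g : h ≤ g := le_trans hle psi_le
    -- phi G h is a PRDF ≤ g
    have hprdf : IsPRDF G (phi G h) := phi_prdf hh
    have hphile : phi G h ≤ g := by
      rw [Pi.le_def]
      intro v
      unfold phi
      split_ifs with hc
      · -- need g v ≥ 1
        by_contra hlt
        have hgv : g v = 0 := by omega
        obtain ⟨x, -, hxu⟩ := hg.1 v hgv
        obtain ⟨a, b, hab, ha1, ha2, hb1, hb2⟩ := hc.2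
        have hga : g a = 2 := by have h1a := le_app hle_g a; omega
        have hgb : g b = 2 := by have h1b := le_app hle_g b; omega
        exact hab ((hxu a ⟨ha1, hga⟩).trans (hxu b ⟨hb1, hgb⟩).symm)
      · exact hle_g v
    have hgle := hg.2 hprdf hphile
    rw [Pi.le_def]
    intro v
    have h1 := le_app hgle v
    unfold phi at h1
    unfold psi
    by_cases hpsi : g v = 1 ∧ Multi G g v
    · rw [if_pos hpsi]; exact Fin.zero_le _
    · rw [if_neg hpsi]
      by_cases hphi : h v = 0 ∧ Multi G h v
      · rw [if_pos hphi] at h1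
        have hmg : Multi G g v := by
          obtain ⟨a, b, hab, ha1, ha2, hb1, hb2⟩ := hphi.2
          exact ⟨a, b, hab, ha1, by have h1a := le_app hle_g a; omega, hb1,
            by have h1b := le_app hle_g b; omega⟩
        have hne1 : g v ≠ 1 := fun hgv => hpsi ⟨hgv, hmg⟩
        rw [hphi.1]
        omega
      · rw [if_neg hphi] at h1; exact h1

end Aux

theorem stmt15 {V : Type*} [Fintype V] [DecidableEq V] (G : SimpleGraph V) :
    Set.ncard {f : V → Fin 3 | Minimal (IsRDF G) f} =
      Set.ncard {g : V → Fin 3 | Minimal (IsPRDF G) g} := by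
  have himg : {g : V → Fin 3 | Minimal (IsPRDF G) g} = phi G '' {f : V → Fin 3 | Minimal (IsRDF G) f} := by
    ext g
    constructor
    · intro hg
      exact ⟨psi G g, psi_minimal hg, phi_psi hg.1⟩
    · rintro ⟨f, hf, rfl⟩
      exact phi_minimal hf
  rw [himg, Set.ncard_image_of_injOn]
  intro f1 hf1 f2 hf2 heq
  have := psi_phi (G := G) hf1
  rw [heq, psi_phi hf2] at this
  exact this.symm
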